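/- Let A, B be n×n positive definite complex matrices and 0 ≤ t ≤ 1. Then A ! B ≤ !_t(A,B) ≤ A ∇ B in the Loewner order (i.e., the differences are positive semidefinite). -/

import Mathlib

open Matrix ComplexOrder

/-- The weighted matrix harmonic mean `A !_t B = ((1-t)A⁻¹ + tB⁻¹)⁻¹`. -/
noncomputable def mharm {n : ℕ} (t : ℝ) (A B : Matrix (Fin n) (Fin n) ℂ) :
    Matrix (Fin n) (Fin n) ℂ :=
  (((1 - t : ℝ) : ℂ) • A⁻¹ + ((t : ℝ) : ℂ) • B⁻¹)⁻¹

/-- The harmonic Heinz matrix mean `!_t(A,B) = (A !_t B + A !_{1-t} B)/2`. -/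
noncomputable def mheinz {n : ℕ} (t : ℝ) (A B : Matrix (Fin n) (Fin n) ℂ) :
    Matrix (Fin n) (Fin n) ℂ :=
  (2 : ℂ)⁻¹ • (mharm t A B + mharm (1 - t) A B)

/-- The matrix arithmetic mean `A ∇ B = (A + B)/2`. -/
noncomputable def marith {n : ℕ} (A B : Matrix (Fin n) (Fin n) ℂ) :
    Matrix (Fin n) (Fin n) ℂ :=
  (2 : ℂ)⁻¹ • (A + B)


/-!
Matrix inversion is operator convex on positive definite matrices. Applied to `A⁻¹` and `B⁻¹`
this gives `A !_t B ≤ A ∇_t B`, and averaging over `t` and `1 - t` gives `!_t(A,B) ≤ A ∇ B`.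
For the lower bound, the inverses of `A !_t B` and `A !_{1-t} B` average to `(A⁻¹ + B⁻¹) / 2`,
so `A ! B` is the harmonic mean of `A !_t B` and `A !_{1-t} B`, hence below their arithmetic
mean `!_t(A,B)`.
-/

-- The L2 operator norm makes square complex matrices a C⋆-algebra, so that
-- `CStarAlgebra.convexOn_ringInverse` applies to them.
open scoped MatrixOrder Matrix.Norms.L2Operator

namespace Matrix.PosDef

variable {ι : Type*} [Fintype ι] [DecidableEq ι] {X Y : Matrix ι ι ℂ} {a b : ℝ}

theorem inv_inv (hX : X.PosDef) : X⁻¹⁻¹ = X :=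
  nonsing_inv_nonsing_inv X ((isUnit_iff_isUnit_det X).1 hX.isUnit)

theorem convexComb (hX : X.PosDef) (hY : Y.PosDef) (ha : 0 ≤ a) (hb : 0 ≤ b) (hab : a + b = 1) :
    (a • X + b • Y).PosDef :=
  IsStrictlyPositive.posDef <|
    CStarAlgebra.convexOn_ringInverse.1 hX.isStrictlyPositive hY.isStrictlyPositive ha hb hab

theorem inv_convexComb_le (hX : X.PosDef) (hY : Y.PosDef) (ha : 0 ≤ a) (hb : 0 ≤ b)
    (hab : a + b = 1) : (a • X + b • Y)⁻¹ ≤ a • X⁻¹ + b • Y⁻¹ := by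
  simpa only [nonsing_inv_eq_ringInverse] using
    CStarAlgebra.convexOn_ringInverse.2 hX.isStrictlyPositive hY.isStrictlyPositive ha hb hab

end Matrix.PosDef

section HarmonicMean

variable {n : ℕ} {A B : Matrix (Fin n) (Fin n) ℂ} {t : ℝ}

theorem mharm_def (t : ℝ) (A B : Matrix (Fin n) (Fin n) ℂ) :
    mharm t A B = ((1 - t) • A⁻¹ + t • B⁻¹)⁻¹ := by
  simp only [mharm, Complex.coe_smul]

theorem inv_mharm (hA : A.PosDef) (hB : B.PosDef) (ht0 : 0 ≤ t) (ht1 : t ≤ 1) :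
    (mharm t A B)⁻¹ = (1 - t) • A⁻¹ + t • B⁻¹ := by
  have hM := hA.inv.convexComb hB.inv (sub_nonneg.2 ht1) ht0 (sub_add_cancel 1 t)
  rw [mharm_def, hM.inv_inv]

theorem posDef_mharm (hA : A.PosDef) (hB : B.PosDef) (ht0 : 0 ≤ t) (ht1 : t ≤ 1) :
    (mharm t A B).PosDef := by
  rw [mharm_def]
  exact (hA.inv.convexComb hB.inv (sub_nonneg.2 ht1) ht0 (sub_add_cancel 1 t)).inv

theorem mharm_le_convexComb (hA : A.PosDef) (hB : B.PosDef) (ht0 : 0 ≤ t) (ht1 : t ≤ 1) :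
    mharm t A B ≤ (1 - t) • A + t • B := by
  have h := hA.inv.inv_convexComb_le hB.inv (sub_nonneg.2 ht1) ht0 (sub_add_cancel 1 t)
  rwa [hA.inv_inv, hB.inv_inv, ← mharm_def] at h

theorem mharm_half_mharm_mharm_one_sub (hA : A.PosDef) (hB : B.PosDef) (ht0 : 0 ≤ t)
    (ht1 : t ≤ 1) :
    mharm (1 / 2) (mharm t A B) (mharm (1 - t) A B) = mharm (1 / 2) A B := by
  rw [mharm_def _ (mharm t A B), inv_mharm hA hB ht0 ht1,
    inv_mharm hA hB (sub_nonneg.2 ht1) (sub_le_self 1 ht0), mharm_def]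
  congr 1
  module

end HarmonicMean

theorem mheinz_def {n : ℕ} (t : ℝ) (A B : Matrix (Fin n) (Fin n) ℂ) :
    mheinz t A B = (2⁻¹ : ℝ) • (mharm t A B + mharm (1 - t) A B) := by
  rw [mheinz, ← Complex.coe_smul, Complex.ofReal_inv, Complex.ofReal_ofNat]

theorem marith_def {n : ℕ} (A B : Matrix (Fin n) (Fin n) ℂ) :
    marith A B = (2⁻¹ : ℝ) • (A + B) := by
  rw [marith, ← Complex.coe_smul, Complex.ofReal_inv, Complex.ofReal_ofNat]

theorem stmt_16 {n : ℕ} (A B : Matrix (Fin n) (Fin n) ℂ)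
    (hA : A.PosDef) (hB : B.PosDef) (t : ℝ) (ht0 : 0 ≤ t) (ht1 : t ≤ 1) :
    (mheinz t A B - mharm (1 / 2) A B).PosSemidef ∧
    (marith A B - mheinz t A B).PosSemidef := by
  have ht0' : 0 ≤ 1 - t := sub_nonneg.2 ht1
  have ht1' : 1 - t ≤ 1 := sub_le_self 1 ht0
  rw [← le_iff, ← le_iff]
  constructor
  · calc mharm (1 / 2) A B = mharm (1 / 2) (mharm t A B) (mharm (1 - t) A B) :=
          (mharm_half_mharm_mharm_one_sub hA hB ht0 ht1).symm
      _ ≤ (1 - 1 / 2 : ℝ) • mharm t A B + (1 / 2 : ℝ) • mharm (1 - t) A B :=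
          mharm_le_convexComb (posDef_mharm hA hB ht0 ht1) (posDef_mharm hA hB ht0' ht1')
            (by norm_num) (by norm_num)
      _ = mheinz t A B := by rw [mheinz_def]; module
  · calc mheinz t A B = (2⁻¹ : ℝ) • (mharm t A B + mharm (1 - t) A B) := mheinz_def t A B
      _ ≤ (2⁻¹ : ℝ) • (((1 - t) • A + t • B) + ((1 - (1 - t)) • A + (1 - t) • B)) := by
          gcongr
          exacts [mharm_le_convexComb hA hB ht0 ht1, mharm_le_convexComb hA hB ht0' ht1']
      _ = marith A B := by rw [marith_def]; module
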